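/- arXiv:2201.05289 — 5 statements merged into one kernel-verified Lean document; each statement's English description precedes it below -/
import Mathlib

section
/- Let θ ∈ ℝ^p with entries ordered by magnitude |θ|_(1) ≥ ... ≥ |θ|_(p), and suppose |θ|_(1) > 0. Then the function c ↦ ‖[|θ|-c]_+‖₁ / ‖[|θ|-c]_+‖₂ (where [x]_+ denotes entrywise positive part of the vector with entries |θ_j| - c) is continuous and non-increasing on the interval 0 ≤ c < |θ|_(1). -/
open Finset Real

/-! For `c ≤ d`, `[a - d]₊` is the soft-thresholding of `[a - c]₊` at level `d - c`, so it
suffices that soft-thresholding a nonnegative vector `a` at a level `t ≥ 0` does not increase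
`‖·‖₁ / ‖·‖₂`. For `b = [a - t]₊` the quotient `b i / a i` increases with `a i`, and so does
`b i`; the Chebyshev-type double sums `∑ i j, (x i - x j) * (b i * a j - b j * a i) ≥ 0` for
`x = a` and `x = b` give `‖b‖₁ ‖a‖₂² ≤ ⟪a, b⟫ ‖a‖₁` and `‖b‖₁ ⟪a, b⟫ ≤ ‖b‖₂² ‖a‖₁`, which
chain to `‖b‖₁² ‖a‖₂² ≤ ‖a‖₁² ‖b‖₂²`. -/

lemma sum_mul_sum_le_of_pairwise_nonneg {ι : Type*} [Fintype ι] (a b x : ι → ℝ)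
    (h : ∀ i j, 0 ≤ (x i - x j) * (b i * a j - b j * a i)) :
    (∑ i, b i) * ∑ i, x i * a i ≤ (∑ i, x i * b i) * ∑ i, a i := by
  have hsum : 0 ≤ ∑ i, ∑ j, (x i - x j) * (b i * a j - b j * a i) :=
    sum_nonneg fun i _ => sum_nonneg fun j _ => h i j
  have hexpand : ∑ i, ∑ j, (x i - x j) * (b i * a j - b j * a i) =
      2 * ((∑ i, x i * b i) * (∑ i, a i) - (∑ i, b i) * ∑ i, x i * a i) := by
    -- each summand as a combination of products `f i * g j`, so that the double sums factor
    have hterm : ∀ i j, (x i - x j) * (b i * a j - b j * a i) =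
        x i * b i * a j + a i * (x j * b j) - (b i * (x j * a j) + x i * a i * b j) := by
      intro i j; ring
    simp only [hterm, sum_add_distrib, sum_sub_distrib, ← mul_sum, ← sum_mul]
    ring
  linarith

lemma max_sub_mul_le_max_sub_mul {t x y : ℝ} (ht : 0 ≤ t) (hy : 0 ≤ y) (hyx : y ≤ x) :
    max (y - t) 0 * x ≤ max (x - t) 0 * y := by
  rcases le_total y t with h | h
  · rw [max_eq_right (by linarith)]
    nlinarith [le_max_right (x - t) 0]
  · rw [max_eq_left (by linarith), max_eq_left (by linarith)]
    nlinarith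

lemma max_max_sub_sub_zero {x c d : ℝ} (hcd : c ≤ d) :
    max (max (x - c) 0 - (d - c)) 0 = max (x - d) 0 := by
  rcases le_total x c with h | h
  · rw [max_eq_right (by linarith : x - c ≤ 0), max_eq_right (by linarith),
      max_eq_right (by linarith)]
  · rw [max_eq_left (by linarith : 0 ≤ x - c)]
    ring_nf

lemma sq_sum_max_sub_mul_le {ι : Type*} [Fintype ι] {a : ι → ℝ} (ha : ∀ i, 0 ≤ a i)
    {t : ℝ} (ht : 0 ≤ t) :
    (∑ i, max (a i - t) 0) ^ 2 * ∑ i, a i ^ 2 ≤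
      (∑ i, a i) ^ 2 * ∑ i, max (a i - t) 0 ^ 2 := by
  set b : ι → ℝ := fun i => max (a i - t) 0
  have hcross : ∀ x : ι → ℝ, (∀ i j, a j ≤ a i → x j ≤ x i) →
      ∀ i j, 0 ≤ (x i - x j) * (b i * a j - b j * a i) := by
    intro x hx i j
    rcases le_total (a j) (a i) with h | h
    · exact mul_nonneg (sub_nonneg.2 (hx i j h))
        (sub_nonneg.2 (max_sub_mul_le_max_sub_mul ht (ha j) h))
    · exact mul_nonneg_of_nonpos_of_nonpos (sub_nonpos.2 (hx j i h))
        (sub_nonpos.2 (max_sub_mul_le_max_sub_mul ht (ha i) h))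
  have hb_mono : ∀ i j, a j ≤ a i → b j ≤ b i := fun i j h =>
    max_le_max (sub_le_sub_right h t) le_rfl
  have h₁ := sum_mul_sum_le_of_pairwise_nonneg a b a (hcross a fun _ _ => id)
  have h₂ := sum_mul_sum_le_of_pairwise_nonneg a b b (hcross b hb_mono)
  have hB : 0 ≤ ∑ i, b i := sum_nonneg fun i _ => le_max_right _ _
  have hA : 0 ≤ ∑ i, a i := sum_nonneg fun i _ => ha i
  simp only [sq, mul_comm (b _) (a _)] at h₁ h₂ ⊢
  calc (∑ i, b i) * (∑ i, b i) * ∑ i, a i * a i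
      ≤ (∑ i, b i) * ((∑ i, a i * b i) * ∑ i, a i) := by
        rw [mul_assoc]; exact mul_le_mul_of_nonneg_left h₁ hB
    _ ≤ (∑ i, b i * b i) * (∑ i, a i) * ∑ i, a i := by
        rw [← mul_assoc]; exact mul_le_mul_of_nonneg_right h₂ hA
    _ = _ := by ring

lemma div_sqrt_le_div_sqrt {s s' q q' : ℝ} (hs : 0 ≤ s) (hs' : 0 ≤ s') (hq : 0 < q)
    (hq' : 0 < q') (h : s' ^ 2 * q ≤ s ^ 2 * q') : s' / √q' ≤ s / √q := by
  rw [div_le_div_iff₀ (sqrt_pos.2 hq') (sqrt_pos.2 hq)]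
  calc s' * √q = √(s' ^ 2 * q) := by rw [sqrt_mul (sq_nonneg _), sqrt_sq hs']
    _ ≤ √(s ^ 2 * q') := sqrt_le_sqrt h
    _ = s * √q' := by rw [sqrt_mul (sq_nonneg _), sqrt_sq hs]

noncomputable def softThresholdRatio {ι : Type*} [Fintype ι] (a : ι → ℝ) (c : ℝ) : ℝ :=
  (∑ j, max (a j - c) 0) / √(∑ j, max (a j - c) 0 ^ 2)

section
variable {ι : Type*} [Fintype ι] (hne : (univ : Finset ι).Nonempty) (a : ι → ℝ)
include hne

lemma sum_sq_max_sub_pos {c : ℝ} (hc : c < univ.sup' hne a) :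
    0 < ∑ j, max (a j - c) 0 ^ 2 := by
  obtain ⟨j, -, hj⟩ := (lt_sup'_iff hne).1 hc
  exact sum_pos' (fun j _ => sq_nonneg _)
    ⟨j, mem_univ j, pow_pos (lt_max_of_lt_left (sub_pos.2 hj)) 2⟩

lemma continuousOn_softThresholdRatio :
    ContinuousOn (softThresholdRatio a) (Set.Iio (univ.sup' hne a)) := by
  have hv : ∀ j, Continuous fun c : ℝ => max (a j - c) 0 := fun j =>
    (continuous_const.sub continuous_id).max continuous_const
  refine (continuous_finsetSum _ fun j _ => hv j).continuousOn.div
    (continuous_finsetSum _ fun j _ => (hv j).pow 2).sqrt.continuousOn fun c hc => ?_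
  exact (sqrt_pos.2 (sum_sq_max_sub_pos hne a hc)).ne'

lemma antitoneOn_softThresholdRatio :
    AntitoneOn (softThresholdRatio a) (Set.Iio (univ.sup' hne a)) := by
  intro c hc d hd hcd
  have hshift : ∀ j, max (a j - d) 0 = max (max (a j - c) 0 - (d - c)) 0 := fun j =>
    (max_max_sub_sub_zero hcd).symm
  have hd_pos := sum_sq_max_sub_pos hne a hd
  simp only [softThresholdRatio] at hd_pos ⊢
  simp only [hshift] at hd_pos ⊢
  exact div_sqrt_le_div_sqrt (sum_nonneg fun j _ => le_max_right _ _)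
    (sum_nonneg fun j _ => le_max_right _ _) (sum_sq_max_sub_pos hne a hc) hd_pos
    (sq_sum_max_sub_mul_le (fun j => le_max_right _ _) (sub_nonneg.2 hcd))

end

theorem soft_threshold_ratio_continuous_antitone_general {p : ℕ}
    (hne : (Finset.univ : Finset (Fin p)).Nonempty) (θ : Fin p → ℝ) :
    ContinuousOn
      (fun c : ℝ =>
        (∑ j, max (|θ j| - c) 0) / Real.sqrt (∑ j, (max (|θ j| - c) 0) ^ 2))
      (Set.Ico 0 (Finset.univ.sup' hne (fun j => |θ j|))) ∧
    AntitoneOn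
      (fun c : ℝ =>
        (∑ j, max (|θ j| - c) 0) / Real.sqrt (∑ j, (max (|θ j| - c) 0) ^ 2))
      (Set.Ico 0 (Finset.univ.sup' hne (fun j => |θ j|))) :=
  ⟨(continuousOn_softThresholdRatio hne _).mono Set.Ico_subset_Iio_self,
    (antitoneOn_softThresholdRatio hne _).mono Set.Ico_subset_Iio_self⟩

/-- The soft-thresholding ratio `c ↦ ‖[|θ|-c]₊‖₁ / ‖[|θ|-c]₊‖₂` is continuous and
non-increasing on `[0, |θ|₍₁₎)`, where `|θ|₍₁₎ = max_j |θ_j| > 0`. -/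
theorem soft_threshold_ratio_continuous_antitone {p : ℕ}
    (hne : (Finset.univ : Finset (Fin p)).Nonempty) (θ : Fin p → ℝ)
    (hmax : 0 < Finset.univ.sup' hne (fun j => |θ j|)) :
    ContinuousOn
      (fun c : ℝ =>
        (∑ j, max (|θ j| - c) 0) / Real.sqrt (∑ j, (max (|θ j| - c) 0) ^ 2))
      (Set.Ico 0 (Finset.univ.sup' hne (fun j => |θ j|))) ∧
    AntitoneOn
      (fun c : ℝ =>
        (∑ j, max (|θ j| - c) 0) / Real.sqrt (∑ j, (max (|θ j| - c) 0) ^ 2))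
      (Set.Ico 0 (Finset.univ.sup' hne (fun j => |θ j|))) :=
  soft_threshold_ratio_continuous_antitone_general hne θ
end

section
/- Let θ ∈ ℝ^p, L ≥ 1, and suppose the largest entry magnitude strictly exceeds the ⌈L²⌉-th largest: |θ|_(1) > |θ|_(⌈L²⌉). Let c ≥ 0 be the smallest nonnegative value such that the soft-thresholded vector β̃ = sign(θ)·[|θ|-c]_+ satisfies ‖β̃‖₁/‖β̃‖₂ ≤ L. Then β* = β̃/‖β̃‖₂ solves min ‖β - θ‖₂² subject to ‖β‖₂ = 1 and ‖β‖₁ ≤ L. -/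
/-!
On the unit sphere, minimizing `‖β - θ‖²` means maximizing `⟨β, θ⟩`. Write `m = [|θ| - c]₊`.
Every feasible `β` has `⟨β, θ⟩ ≤ ∑ |βᵢ| (mᵢ + c) ≤ ‖m‖₂ + c L` by Cauchy–Schwarz, while
`β* = sign(θ) m / ‖m‖₂` attains `‖m‖₂ + c ‖m‖₁ / ‖m‖₂`. This is the same value: if `c > 0`, the
minimality of `c` and the continuity of `c ↦ ‖m‖₁ / ‖m‖₂` force `‖m‖₁ / ‖m‖₂ = L`.
The gap hypothesis is what makes `m ≠ 0`: it puts `c` below the largest magnitude.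
-/

open Finset Real Filter Topology

lemma Real.sign_mul_self_eq_abs (r : ℝ) : Real.sign r * r = |r| := by
  rcases lt_trichotomy r 0 with h | h | h
  · rw [Real.sign_of_neg h, abs_of_neg h]; ring
  · simp [h]
  · rw [Real.sign_of_pos h, abs_of_pos h]; ring

namespace SoftThreshold

variable {ι : Type*}

def excess (θ : ι → ℝ) (c : ℝ) (j : ι) : ℝ := max (|θ j| - c) 0

noncomputable def softThreshold (θ : ι → ℝ) (c : ℝ) (j : ι) : ℝ :=
  Real.sign (θ j) * excess θ c j

section Pointwise

variable (θ : ι → ℝ) (c : ℝ)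

lemma excess_nonneg (j : ι) : 0 ≤ excess θ c j := le_max_right _ _

lemma sub_le_excess (j : ι) : |θ j| - c ≤ excess θ c j := le_max_left _ _

lemma abs_softThreshold (hc : 0 ≤ c) (j : ι) :
    |softThreshold θ c j| = excess θ c j := by
  rcases eq_or_ne (θ j) 0 with h | h
  · simp [softThreshold, excess, h, hc]
  · rw [softThreshold, abs_mul, abs_of_nonneg (excess_nonneg θ c j)]
    rcases Real.sign_apply_eq_of_ne_zero _ h with h' | h' <;> simp [h']

lemma softThreshold_mul_self (j : ι) :
    softThreshold θ c j * θ j = excess θ c j ^ 2 + c * excess θ c j := by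
  rcases le_total (|θ j| - c) 0 with h | h
  · simp [softThreshold, excess, max_eq_right h]
  · calc softThreshold θ c j * θ j = (Real.sign (θ j) * θ j) * excess θ c j := by
          rw [softThreshold]; ring
      _ = _ := by rw [Real.sign_mul_self_eq_abs, excess, max_eq_left h]; ring

end Pointwise

variable [Fintype ι]

noncomputable def excessRatio (θ : ι → ℝ) (c : ℝ) : ℝ :=
  (∑ j, excess θ c j) / √(∑ j, excess θ c j ^ 2)

noncomputable def normalize (v : ι → ℝ) (j : ι) : ℝ := v j / √(∑ i, v i ^ 2)

lemma sum_sub_sq (x y : ι → ℝ) :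
    ∑ i, (x i - y i) ^ 2 = ∑ i, x i ^ 2 - 2 * ∑ i, x i * y i + ∑ i, y i ^ 2 := by
  simp only [sub_sq, sum_add_distrib, sum_sub_distrib, mul_sum, mul_assoc]

lemma sum_normalize_sq {v : ι → ℝ} (hv : 0 < ∑ i, v i ^ 2) : ∑ i, normalize v i ^ 2 = 1 := by
  simp only [normalize, div_pow, ← sum_div, sq_sqrt hv.le, div_self hv.ne']

lemma sum_abs_normalize (v : ι → ℝ) :
    ∑ i, |normalize v i| = (∑ i, |v i|) / √(∑ i, v i ^ 2) := by
  simp only [normalize, abs_div, abs_of_nonneg (sqrt_nonneg _), sum_div]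

variable (θ : ι → ℝ)

lemma sum_softThreshold_sq {c : ℝ} (hc : 0 ≤ c) :
    ∑ j, softThreshold θ c j ^ 2 = ∑ j, excess θ c j ^ 2 := by
  simp only [← sq_abs (softThreshold θ c _), abs_softThreshold θ c hc]

lemma continuousAt_excessRatio {c : ℝ} (hpos : 0 < ∑ j, excess θ c j ^ 2) :
    ContinuousAt (excessRatio θ) c := by
  have hcont (j : ι) : Continuous fun c => excess θ c j := by unfold excess; fun_prop
  exact ((continuous_finsetSum _ fun j _ => hcont j).continuousAt).div
    ((continuous_finsetSum _ fun j _ => (hcont j).pow 2).sqrt.continuousAt)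
    (sqrt_pos.2 hpos).ne'

lemma sum_mul_le_sqrt_mul_sqrt_add (c : ℝ) (β : ι → ℝ) :
    ∑ i, β i * θ i ≤ √(∑ i, β i ^ 2) * √(∑ i, excess θ c i ^ 2) + c * ∑ i, |β i| := by
  calc ∑ i, β i * θ i ≤ ∑ i, |β i| * excess θ c i + c * ∑ i, |β i| := by
        rw [mul_sum, ← sum_add_distrib]
        refine sum_le_sum fun i _ => ?_
        calc β i * θ i ≤ |β i| * |θ i| := by rw [← abs_mul]; exact le_abs_self _
          _ ≤ |β i| * (excess θ c i + c) := by
            gcongr; linarith [sub_le_excess θ c i]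
          _ = _ := by ring
    _ ≤ _ := by
        gcongr
        simpa only [sq_abs] using sum_mul_le_sqrt_mul_sqrt univ (fun i => |β i|) (excess θ c)

lemma sum_normalize_softThreshold_mul {c : ℝ} (hc : 0 ≤ c) (hpos : 0 < ∑ j, excess θ c j ^ 2) :
    ∑ i, normalize (softThreshold θ c) i * θ i
      = √(∑ j, excess θ c j ^ 2) + c * excessRatio θ c := by
  simp only [normalize, div_mul_eq_mul_div, softThreshold_mul_self, ← sum_div,
    sum_add_distrib, ← mul_sum, sum_softThreshold_sq θ hc, excessRatio]
  field_simp
  rw [sq_sqrt hpos.le]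

theorem sum_sq_sub_normalize_softThreshold_le {c L : ℝ} (hc : 0 ≤ c)
    (hpos : 0 < ∑ j, excess θ c j ^ 2) (hslack : c = 0 ∨ excessRatio θ c = L)
    {β : ι → ℝ} (hβ₂ : ∑ i, β i ^ 2 = 1) (hβ₁ : ∑ i, |β i| ≤ L) :
    ∑ i, (normalize (softThreshold θ c) i - θ i) ^ 2 ≤ ∑ i, (β i - θ i) ^ 2 := by
  have hpos' : 0 < ∑ j, softThreshold θ c j ^ 2 := by rwa [sum_softThreshold_sq θ hc]
  rw [sum_sub_sq, sum_sub_sq, sum_normalize_sq hpos', hβ₂]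
  suffices ∑ i, β i * θ i ≤ ∑ i, normalize (softThreshold θ c) i * θ i by linarith
  calc ∑ i, β i * θ i ≤ √(∑ i, β i ^ 2) * √(∑ i, excess θ c i ^ 2) + c * ∑ i, |β i| :=
        sum_mul_le_sqrt_mul_sqrt_add θ c β
    _ ≤ √(∑ j, excess θ c j ^ 2) + c * L := by rw [hβ₂, sqrt_one, one_mul]; gcongr
    _ = √(∑ j, excess θ c j ^ 2) + c * excessRatio θ c := by
        rcases hslack with rfl | h <;> simp [*]
    _ = _ := (sum_normalize_softThreshold_mul θ hc hpos).symm

lemma sum_excess_sq_pos {c : ℝ} {j₀ : ι} (h : c < |θ j₀|) : 0 < ∑ j, excess θ c j ^ 2 :=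
  sum_pos' (fun _ _ => sq_nonneg _)
    ⟨j₀, mem_univ _, pow_pos (lt_max_of_lt_left (sub_pos.2 h)) 2⟩

lemma sum_ite_div_sqrt_sum_sq (P : ι → Prop) [DecidablePred P] {t : ℝ} (ht : 0 < t) :
    (∑ j, if P j then t else 0) / √(∑ j, (if P j then t else 0) ^ 2) = √(#{j | P j} : ℝ) := by
  simp only [ite_pow, zero_pow two_ne_zero, ← sum_filter, sum_const, nsmul_eq_mul]
  rw [sqrt_mul (Nat.cast_nonneg _), sqrt_sq ht.le, mul_div_mul_right _ _ ht.ne', div_sqrt]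

/-- Thresholding at the second largest magnitude leaves exactly the maximal entries, all with
the same value, so the ratio is `√(number of maximal entries)`. -/
lemma exists_excessRatio_le {j₀ : ι} (hj₀ : ∀ j, |θ j| ≤ |θ j₀|) (hlt : ∃ j, |θ j| < |θ j₀|)
    {L : ℝ} (hL : 0 ≤ L) (hK : (#{j | |θ j| = |θ j₀|} : ℝ) ≤ L ^ 2) :
    ∃ c < |θ j₀|, 0 ≤ c ∧ excessRatio θ c ≤ L := by
  obtain ⟨j₁, hj₁, hj₁max⟩ := exists_max_image {j | |θ j| < |θ j₀|} (fun j => |θ j|)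
    (hlt.imp fun j hj => mem_filter.2 ⟨mem_univ _, hj⟩)
  have hj₁lt : |θ j₁| < |θ j₀| := (mem_filter.1 hj₁).2
  have hexcess (j : ι) : excess θ |θ j₁| j =
      if |θ j| = |θ j₀| then |θ j₀| - |θ j₁| else 0 := by
    by_cases hj : |θ j| = |θ j₀|
    · simp [excess, hj, hj₁lt.le]
    · have : |θ j| ≤ |θ j₁| := hj₁max j (mem_filter.2 ⟨mem_univ _, (hj₀ j).lt_of_ne hj⟩)
      simp [excess, hj, this]
  refine ⟨|θ j₁|, hj₁lt, abs_nonneg _, ?_⟩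
  rw [excessRatio, funext hexcess, sum_ite_div_sqrt_sum_sq _ (sub_pos.2 hj₁lt)]
  exact (sqrt_le_left hL).2 hK

section Least

variable {θ} {c L : ℝ} (hc : IsLeast {c' | 0 ≤ c' ∧ excessRatio θ c' ≤ L} c)
include hc

lemma excessRatio_eq_of_isLeast (hc₀ : 0 < c) (hpos : 0 < ∑ j, excess θ c j ^ 2) :
    excessRatio θ c = L := by
  refine hc.1.2.antisymm (not_lt.1 fun hlt => ?_)
  have hnear : ∀ᶠ c' in 𝓝 c, 0 < c' ∧ excessRatio θ c' < L :=
    (eventually_gt_nhds hc₀).and ((continuousAt_excessRatio θ hpos).eventually (gt_mem_nhds hlt))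
  obtain ⟨c', ⟨hc'₀, hc'L⟩, hc'c⟩ :=
    ((hnear.filter_mono nhdsWithin_le_nhds).and (self_mem_nhdsWithin (s := Set.Iio c))).exists
  exact (hc.2 ⟨hc'₀.le, hc'L.le⟩).not_gt hc'c

lemma lt_abs_of_isLeast {j₀ : ι} (hj₀ : ∀ j, |θ j| ≤ |θ j₀|) (hlt : ∃ j, |θ j| < |θ j₀|)
    (hL : 0 ≤ L) (hK : (#{j | |θ j| = |θ j₀|} : ℝ) ≤ L ^ 2) : c < |θ j₀| :=
  have ⟨_, hc'lt, hc'⟩ := exists_excessRatio_le θ hj₀ hlt hL hK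
  (hc.2 hc').trans_lt hc'lt

theorem normalize_softThreshold_solves (hpos : 0 < ∑ j, excess θ c j ^ 2) :
    let βs := normalize (softThreshold θ c)
    (√(∑ i, βs i ^ 2) = 1 ∧ ∑ i, |βs i| ≤ L) ∧
    ∀ β : ι → ℝ, √(∑ i, β i ^ 2) = 1 → ∑ i, |β i| ≤ L →
      ∑ i, (βs i - θ i) ^ 2 ≤ ∑ i, (β i - θ i) ^ 2 := by
  have hc₀ : 0 ≤ c := hc.1.1
  have hslack : c = 0 ∨ excessRatio θ c = L :=
    hc₀.eq_or_lt.imp Eq.symm (excessRatio_eq_of_isLeast hc · hpos)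
  have hpos' : 0 < ∑ j, softThreshold θ c j ^ 2 := by rwa [sum_softThreshold_sq θ hc₀]
  refine ⟨⟨sqrt_eq_one.2 (sum_normalize_sq hpos'), ?_⟩, fun β hβ₂ hβ₁ =>
    sum_sq_sub_normalize_softThreshold_le θ hc₀ hpos hslack (sqrt_eq_one.1 hβ₂) hβ₁⟩
  simp only [sum_abs_normalize, abs_softThreshold θ c hc₀, sum_softThreshold_sq θ hc₀]
  exact hc.1.2

end Least

end SoftThreshold

open SoftThreshold in
/-- If the largest entry magnitude of `θ` strictly exceeds the `⌈L²⌉`-th largest (i.e. fewer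
than `⌈L²⌉` entries attain the maximal magnitude), and `c` is the smallest nonnegative value
such that the soft-thresholded vector `β̃ = sign(θ)·[|θ|-c]₊` satisfies `‖β̃‖₁/‖β̃‖₂ ≤ L`,
then `β* = β̃/‖β̃‖₂` solves `min ‖β-θ‖₂²` s.t. `‖β‖₂ = 1`, `‖β‖₁ ≤ L`. -/
theorem soft_threshold_solves_proximal {p : ℕ}
    (hne : (Finset.univ : Finset (Fin p)).Nonempty)
    (θ : Fin p → ℝ) (L : ℝ) (hL : 1 ≤ L) (hLp : ⌈L ^ 2⌉₊ ≤ p)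
    (hgap : (Finset.univ.filter
        (fun j => |θ j| = Finset.univ.sup' hne (fun i => |θ i|))).card < ⌈L ^ 2⌉₊)
    (c : ℝ)
    (hc : IsLeast {c' : ℝ | 0 ≤ c' ∧
        (∑ j, max (|θ j| - c') 0) / Real.sqrt (∑ j, (max (|θ j| - c') 0) ^ 2) ≤ L} c) :
    let βt : Fin p → ℝ := fun j => Real.sign (θ j) * max (|θ j| - c) 0
    let βs : Fin p → ℝ := fun j => βt j / Real.sqrt (∑ i, (βt i) ^ 2)
    (Real.sqrt (∑ i, (βs i) ^ 2) = 1 ∧ ∑ i, |βs i| ≤ L) ∧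
    ∀ β : Fin p → ℝ, Real.sqrt (∑ i, (β i) ^ 2) = 1 → (∑ i, |β i|) ≤ L →
      ∑ i, (βs i - θ i) ^ 2 ≤ ∑ i, (β i - θ i) ^ 2 := by
  replace hc : IsLeast {c' | 0 ≤ c' ∧ excessRatio θ c' ≤ L} c := hc
  obtain ⟨j₀, -, hj₀⟩ := exists_mem_eq_sup' hne (fun i => |θ i|)
  rw [hj₀] at hgap
  have hj₀max (j : Fin p) : |θ j| ≤ |θ j₀| := hj₀ ▸ le_sup' (fun i => |θ i|) (mem_univ j)
  have hlt : ∃ j, |θ j| < |θ j₀| := by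
    obtain ⟨j, -, hj⟩ :=
      exists_mem_notMem_of_card_lt_card (hgap.trans_le (hLp.trans_eq (card_fin p).symm))
    exact ⟨j, (hj₀max j).lt_of_ne (by simpa using hj)⟩
  have hcmax := lt_abs_of_isLeast hc hj₀max hlt (by linarith) (Nat.lt_ceil.1 hgap).le
  exact normalize_softThreshold_solves hc (sum_excess_sq_pos θ hcmax)
end

section
/- Let ξ₁ ∈ ℝ^p with ‖ξ₁‖₂ = 1 and at most s nonzero coordinates. For any unit vector β ∈ ℝ^p with h = β - ξ₁, δ = 1 - ξ₁⊤β ≥ 0, and ω = ‖β‖₁ - ‖ξ₁‖₁, one has ‖h‖₁ ≤ 2√(2sδ) + ω. -/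
open Finset Real Matrix

/-!
Off the support `S` of `ξ` the error `h = β - ξ` equals `β`, and on `S` the reverse triangle
inequality gives `‖ξ‖₁ ≤ ‖β_S‖₁ + ‖h_S‖₁`; hence `‖h‖₁ ≤ 2‖h_S‖₁ + (‖β‖₁ - ‖ξ‖₁)`.
By Cauchy–Schwarz `‖h_S‖₁ ≤ √|S| ‖h‖₂`, and for unit vectors `‖h‖₂² = 2(1 - ξ ⬝ᵥ β)`.
-/

section

variable {ι : Type*} [Fintype ι]

theorem sum_sq_sub_eq_two_mul_one_sub_dotProduct {ξ β : ι → ℝ}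
    (hξ : ∑ i, ξ i ^ 2 = 1) (hβ : ∑ i, β i ^ 2 = 1) :
    ∑ i, (β i - ξ i) ^ 2 = 2 * (1 - ξ ⬝ᵥ β) := by
  have hexpand : ∀ i, (β i - ξ i) ^ 2 = β i ^ 2 + ξ i ^ 2 - 2 * (ξ i * β i) := fun i => by ring
  simp only [hexpand, sum_sub_distrib, sum_add_distrib, ← mul_sum, hξ, hβ, dotProduct]
  ring

theorem sum_abs_sub_le_two_mul_sum_abs_sub_on_support [DecidableEq ι] (S : Finset ι)
    {ξ : ι → ℝ} (hξ : ∀ i ∉ S, ξ i = 0) (β : ι → ℝ) :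
    ∑ i, |β i - ξ i| ≤ 2 * ∑ i ∈ S, |β i - ξ i| + ((∑ i, |β i|) - ∑ i, |ξ i|) := by
  have hoff : ∀ i ∈ Sᶜ, |β i - ξ i| = |β i| ∧ |ξ i| = 0 := fun i hi => by
    simp [hξ i (mem_compl.mp hi)]
  have hon : ∑ i ∈ S, |ξ i| ≤ ∑ i ∈ S, |β i| + ∑ i ∈ S, |β i - ξ i| := by
    rw [← sum_add_distrib]
    refine sum_le_sum fun i _ => ?_
    linarith [abs_sub_abs_le_abs_sub (ξ i) (β i), abs_sub_comm (ξ i) (β i)]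
  rw [← sum_add_sum_compl S (fun i => |β i - ξ i|), ← sum_add_sum_compl S (fun i => |β i|),
    ← sum_add_sum_compl S (fun i => |ξ i|), sum_congr rfl fun i hi => (hoff i hi).1,
    sum_congr rfl fun i hi => (hoff i hi).2, sum_const_zero]
  linarith

theorem sum_abs_le_sqrt_card_mul_sum_sq (S : Finset ι) (f : ι → ℝ) :
    ∑ i ∈ S, |f i| ≤ √(#S * ∑ i, f i ^ 2) := by
  have hCS : (∑ i ∈ S, |f i|) ^ 2 ≤ #S * ∑ i ∈ S, f i ^ 2 := by
    simpa only [sq_abs] using sq_sum_le_card_mul_sum_sq (s := S) (f := fun i => |f i|)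
  have hsub : ∑ i ∈ S, f i ^ 2 ≤ ∑ i, f i ^ 2 :=
    sum_le_sum_of_subset_of_nonneg (subset_univ S) fun i _ _ => sq_nonneg _
  refine le_sqrt_of_sq_le (hCS.trans ?_)
  gcongr

end

theorem l1_error_bound_general {p s : ℕ} (ξ β : Fin p → ℝ)
    (hξu : ∑ i, (ξ i) ^ 2 = 1)
    (hξsp : (Finset.univ.filter (fun i => ξ i ≠ 0)).card ≤ s)
    (hβu : ∑ i, (β i) ^ 2 = 1) :
    (∑ i, |β i - ξ i|) ≤
      2 * Real.sqrt (2 * s * (1 - ξ ⬝ᵥ β)) + ((∑ i, |β i|) - ∑ i, |ξ i|) := by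
  set S := univ.filter fun i => ξ i ≠ 0
  have hS : ∑ i ∈ S, |β i - ξ i| ≤ √(2 * s * (1 - ξ ⬝ᵥ β)) := calc
    ∑ i ∈ S, |β i - ξ i| ≤ √(#S * ∑ i, (β i - ξ i) ^ 2) := sum_abs_le_sqrt_card_mul_sum_sq S _
    _ ≤ √(s * (2 * (1 - ξ ⬝ᵥ β))) := by
      rw [sum_sq_sub_eq_two_mul_one_sub_dotProduct hξu hβu]
      gcongr
      rw [← sum_sq_sub_eq_two_mul_one_sub_dotProduct hξu hβu]
      positivity
    _ = √(2 * s * (1 - ξ ⬝ᵥ β)) := by ring_nf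
  have hsupp : ∀ i ∉ S, ξ i = 0 := fun i hi => by simpa [S] using hi
  linarith [sum_abs_sub_le_two_mul_sum_abs_sub_on_support S hsupp β]

/-- Proposition 4: for an `s`-sparse unit vector `ξ₁` and any unit vector `β` with
`h = β - ξ₁`, `δ = 1 - ξ₁⊤β ≥ 0`, `ω = ‖β‖₁ - ‖ξ₁‖₁`, one has `‖h‖₁ ≤ 2√(2sδ) + ω`. -/
theorem l1_error_bound {p s : ℕ} (ξ β : Fin p → ℝ)
    (hξu : ∑ i, (ξ i) ^ 2 = 1)
    (hξsp : (Finset.univ.filter (fun i => ξ i ≠ 0)).card ≤ s)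
    (hβu : ∑ i, (β i) ^ 2 = 1)
    (hδ : 0 ≤ 1 - ξ ⬝ᵥ β) :
    (∑ i, |β i - ξ i|) ≤
      2 * Real.sqrt (2 * s * (1 - ξ ⬝ᵥ β)) + ((∑ i, |β i|) - ∑ i, |ξ i|) :=
  l1_error_bound_general ξ β hξu hξsp hβu
end

section
/- Let Σ̂, Λ̂ ∈ ℝ^{p×p} be symmetric with Λ̂ positive definite, and let β̂₁, …, β̂_p be generalized eigenvectors satisfying Σ̂β̂_j = ρ̂_j Λ̂β̂_j with β̂_i⊤Σ̂β̂_j = ρ̂_i·1{i=j} and ρ̂₁ ≥ … ≥ ρ̂_p > 0. Define the Schur-complement deflated matrices Σ̃₁ = Σ̂ and Σ̃_{ℓ+1} = Σ̃_ℓ - (Σ̃_ℓ β̂_ℓ β̂_ℓ⊤ Σ̃_ℓ)/(β̂_ℓ⊤Σ̃_ℓβ̂_ℓ). Then for each k: (a) Σ̃_{k+1} β̂_j = 0 for all j ≤ k; (b) Σ̃_{k+1} β̂_j = Σ̂ β̂_j for all j ≥ k+1; and consequently (c) the pair (ρ̂_{k+1}, β̂_{k+1}) is the leading generalized eigenvalue-eigenvector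 pair of the deflated problem max_β (β⊤Σ̃_{k+1}β)/(β⊤Λ̂β). -/
open Finset Real Matrix

/-!
Deflating by `β̂_ℓ` annihilates `β̂_ℓ` and, by the `Σ̂`-orthogonality of the `β̂_j`, leaves
`Σ̃_ℓ β̂_j` unchanged for `j ≠ ℓ`; by induction `Σ̃_{k+1}` kills `β̂_1, …, β̂_k` and agrees with
`Σ̂` on the others. The `β̂_j` are `Λ̂`-orthonormal, hence a basis, and in their coordinates `c`
the Rayleigh quotient of `Σ̃_{k+1}` is `∑_{j > k} ρ̂_j c_j² / ∑_j c_j² ≤ ρ̂_{k+1}`.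
-/

section SchurDeflate

variable {K n : Type*} [Field K] [Fintype n]

def schurDeflate (M : Matrix n n K) (v : n → K) : Matrix n n K :=
  M - (1 / (v ⬝ᵥ (M *ᵥ v))) • vecMulVec (M *ᵥ v) (vecMul v M)

theorem schurDeflate_mulVec (M : Matrix n n K) (v x : n → K) :
    schurDeflate M v *ᵥ x = M *ᵥ x - (v ⬝ᵥ (M *ᵥ x) / v ⬝ᵥ (M *ᵥ v)) • (M *ᵥ v) := by
  rw [schurDeflate, sub_mulVec, smul_mulVec, vecMulVec_mulVec, op_smul_eq_smul,
    ← dotProduct_mulVec, smul_smul, one_div_mul_eq_div]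

theorem schurDeflate_mulVec_self {M : Matrix n n K} {v : n → K} (hv : v ⬝ᵥ (M *ᵥ v) ≠ 0) :
    schurDeflate M v *ᵥ v = 0 := by
  rw [schurDeflate_mulVec, div_self hv, one_smul, sub_self]

theorem schurDeflate_mulVec_of_mulVec_eq_zero {M : Matrix n n K} (v : n → K) {x : n → K}
    (hx : M *ᵥ x = 0) : schurDeflate M v *ᵥ x = 0 := by
  rw [schurDeflate_mulVec, hx, dotProduct_zero, zero_div, zero_smul, sub_zero]

theorem schurDeflate_mulVec_of_dotProduct_eq_zero {M : Matrix n n K} {v x : n → K}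
    (hx : v ⬝ᵥ (M *ᵥ x) = 0) : schurDeflate M v *ᵥ x = M *ᵥ x := by
  rw [schurDeflate_mulVec, hx, zero_div, zero_smul, sub_zero]

theorem schurDeflate_seq_mulVec {p : ℕ} (S : Matrix n n K) (b : Fin p → n → K)
    (horth : ∀ i j, i ≠ j → b i ⬝ᵥ (S *ᵥ b j) = 0) (hdiag : ∀ i, b i ⬝ᵥ (S *ᵥ b i) ≠ 0)
    (T : ℕ → Matrix n n K) (hT0 : T 0 = S)
    (hTs : ∀ ℓ, ∀ h : ℓ < p, T (ℓ + 1) = schurDeflate (T ℓ) (b ⟨ℓ, h⟩)) :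
    ∀ m ≤ p, (∀ j : Fin p, (j : ℕ) < m → T m *ᵥ b j = 0) ∧
      (∀ j : Fin p, m ≤ (j : ℕ) → T m *ᵥ b j = S *ᵥ b j) := by
  intro m
  induction m with
  | zero => exact fun _ => ⟨fun j hj => absurd hj j.val.not_lt_zero, fun j _ => by rw [hT0]⟩
  | succ ℓ ih =>
    intro (hℓ : ℓ < p)
    obtain ⟨hker, hfix⟩ := ih hℓ.le
    have hTv : T ℓ *ᵥ b ⟨ℓ, hℓ⟩ = S *ᵥ b ⟨ℓ, hℓ⟩ := hfix _ le_rfl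
    rw [hTs ℓ hℓ]
    refine ⟨fun j hj => ?_, fun j hj => ?_⟩
    · rcases (Nat.lt_succ_iff.mp hj).lt_or_eq with hj | hj
      · exact schurDeflate_mulVec_of_mulVec_eq_zero _ (hker j hj)
      · obtain rfl : j = ⟨ℓ, hℓ⟩ := Fin.ext hj
        exact schurDeflate_mulVec_self (by rw [hTv]; exact hdiag _)
    · have hne : (⟨ℓ, hℓ⟩ : Fin p) ≠ j := by rintro rfl; simp at hj
      have hSj := hfix j (by omega)
      rw [schurDeflate_mulVec_of_dotProduct_eq_zero (by rw [hSj]; exact horth _ _ hne), hSj]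

end SchurDeflate

section OrthonormalWith

variable {K n ι : Type*} [Fintype n] [DecidableEq ι]

def IsOrthonormalWith [Field K] (A : Matrix n n K) (b : ι → n → K) : Prop :=
  ∀ i j, b i ⬝ᵥ (A *ᵥ b j) = if i = j then 1 else 0

namespace IsOrthonormalWith

theorem of_eigen [Field K] {S A : Matrix n n K} {b : ι → n → K} {ρ : ι → K}
    (heig : ∀ j, S *ᵥ b j = ρ j • (A *ᵥ b j))
    (hnorm : ∀ i j, b i ⬝ᵥ (S *ᵥ b j) = if i = j then ρ i else 0) (hρ : ∀ j, ρ j ≠ 0) :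
    IsOrthonormalWith A b := by
  intro i j
  have h := hnorm i j
  rw [heig, dotProduct_smul, smul_eq_mul] at h
  split_ifs at h ⊢ with hij
  · subst hij
    exact mul_left_cancel₀ (hρ i) (h.trans (mul_one _).symm)
  · exact (mul_eq_zero.mp h).resolve_left (hρ j)

variable [Fintype ι]

theorem sum_smul_dotProduct_mulVec [Field K] {A : Matrix n n K} {b : ι → n → K}
    (hb : IsOrthonormalWith A b) (c : ι → K) (j : ι) :
    (∑ i, c i • b i) ⬝ᵥ (A *ᵥ b j) = c j := by
  simp [sum_dotProduct, smul_dotProduct, hb _ j]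

theorem linearIndependent [Field K] {A : Matrix n n K} {b : ι → n → K}
    (hb : IsOrthonormalWith A b) : LinearIndependent K b := by
  refine Fintype.linearIndependent_iff.mpr fun c hc j => ?_
  simpa [hc] using (hb.sum_smul_dotProduct_mulVec c j).symm

theorem dotProduct_mulVec_sum_smul [Field K] {A T : Matrix n n K} {b : ι → n → K}
    (hb : IsOrthonormalWith A b) {μ : ι → K} (heig : ∀ j, T *ᵥ b j = μ j • (A *ᵥ b j))
    (c : ι → K) :
    (∑ i, c i • b i) ⬝ᵥ (T *ᵥ ∑ i, c i • b i) = ∑ i, μ i * c i ^ 2 := by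
  simp only [mulVec_sum, mulVec_smul, heig, dotProduct_sum, dotProduct_smul,
    hb.sum_smul_dotProduct_mulVec, smul_eq_mul]
  exact sum_congr rfl fun i _ => by ring

theorem dotProduct_mulVec_div_le [Field K] [LinearOrder K] [IsStrictOrderedRing K] {A T : Matrix n n K}
    {b : ι → n → K} (hb : IsOrthonormalWith A b) (hcard : Fintype.card ι = Fintype.card n)
    {μ : ι → K} (heig : ∀ j, T *ᵥ b j = μ j • (A *ᵥ b j)) {r : K} (hμ : ∀ j, μ j ≤ r)
    (hr : 0 ≤ r) (β : n → K) : β ⬝ᵥ (T *ᵥ β) / β ⬝ᵥ (A *ᵥ β) ≤ r := by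
  have hβ : β ∈ Submodule.span K (Set.range b) := by
    rw [hb.linearIndependent.span_eq_top_of_card_eq_finrank' (by simpa using hcard)]
    exact Submodule.mem_top
  obtain ⟨c, rfl⟩ := (Submodule.mem_span_range_iff_exists_fun K).mp hβ
  have hA : ∀ j, A *ᵥ b j = (1 : K) • (A *ᵥ b j) := fun j => (one_smul K _).symm
  rw [hb.dotProduct_mulVec_sum_smul heig, hb.dotProduct_mulVec_sum_smul hA]
  refine div_le_of_le_mul₀ (by positivity) hr ?_
  simp only [one_mul, mul_sum]
  exact sum_le_sum fun i _ => mul_le_mul_of_nonneg_right (hμ i) (sq_nonneg _)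

end IsOrthonormalWith

end OrthonormalWith

theorem schur_deflation_eigenpairs_general {p : ℕ}
    (S Λm : Matrix (Fin p) (Fin p) ℝ)
    (βh : Fin p → Fin p → ℝ) (ρ : Fin p → ℝ)
    (heig : ∀ j, S *ᵥ βh j = ρ j • (Λm *ᵥ βh j))
    (hnorm : ∀ i j, βh i ⬝ᵥ (S *ᵥ βh j) = if i = j then ρ i else 0)
    (hmono : ∀ i j : Fin p, i ≤ j → ρ j ≤ ρ i)
    (hpos : ∀ j, 0 < ρ j)
    (T : ℕ → Matrix (Fin p) (Fin p) ℝ)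
    (hT0 : T 0 = S)
    (hTs : ∀ ℓ, ∀ h : ℓ < p,
      T (ℓ + 1) = T ℓ -
        (1 / (βh ⟨ℓ, h⟩ ⬝ᵥ (T ℓ *ᵥ βh ⟨ℓ, h⟩))) •
          Matrix.vecMulVec (T ℓ *ᵥ βh ⟨ℓ, h⟩) (Matrix.vecMul (βh ⟨ℓ, h⟩) (T ℓ)))
    (k : ℕ) (hk : k + 1 < p) :
    (∀ j : Fin p, (j : ℕ) ≤ k → T (k + 1) *ᵥ βh j = 0) ∧
    (∀ j : Fin p, k + 1 ≤ (j : ℕ) → T (k + 1) *ᵥ βh j = S *ᵥ βh j) ∧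
    (T (k + 1) *ᵥ βh ⟨k + 1, hk⟩ = ρ ⟨k + 1, hk⟩ • (Λm *ᵥ βh ⟨k + 1, hk⟩) ∧
      ∀ β : Fin p → ℝ, β ≠ 0 →
        (β ⬝ᵥ (T (k + 1) *ᵥ β)) / (β ⬝ᵥ (Λm *ᵥ β)) ≤ ρ ⟨k + 1, hk⟩) := by
  obtain ⟨hker, hfix⟩ := schurDeflate_seq_mulVec S βh (fun i j hij => by simp [hnorm, hij])
    (fun i => by simpa [hnorm] using (hpos i).ne') T hT0 hTs (k + 1) hk.le
  have hb : IsOrthonormalWith Λm βh := .of_eigen heig hnorm fun j => (hpos j).ne'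
  refine ⟨fun j hj => hker j (Nat.lt_succ_of_le hj), hfix, by rw [hfix _ le_rfl, heig],
    fun β _ => hb.dotProduct_mulVec_div_le rfl (μ := fun j => if k + 1 ≤ (j : ℕ) then ρ j else 0)
      (fun j => ?_) (fun j => ?_) (hpos _).le β⟩
  · split_ifs with hj
    · rw [hfix j hj, heig]
    · rw [hker j (not_le.mp hj), zero_smul]
  · split_ifs with hj
    · exact hmono _ _ (Fin.le_def.mpr hj)
    · exact (hpos _).le

/-- Proposition (deflation): Let `β̂_j` be generalized eigenvectors of the pencil `(Σ̂, Λ̂)`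
with `Σ̂β̂_j = ρ̂_j Λ̂β̂_j`, `β̂_i⊤Σ̂β̂_j = ρ̂_i·1{i=j}`, `ρ̂₁ ≥ … ≥ ρ̂_p > 0`, and let
`Σ̃₁ = Σ̂`, `Σ̃_{ℓ+1} = Σ̃_ℓ - Σ̃_ℓβ̂_ℓβ̂_ℓ⊤Σ̃_ℓ/(β̂_ℓ⊤Σ̃_ℓβ̂_ℓ)` be the Schur-complement
deflations. Then (a) `Σ̃_{k+1}β̂_j = 0` for `j ≤ k`; (b) `Σ̃_{k+1}β̂_j = Σ̂β̂_j` for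
`j ≥ k+1`; (c) `(ρ̂_{k+1}, β̂_{k+1})` is the leading generalized eigenpair of
`(Σ̃_{k+1}, Λ̂)`. (Indices are 0-based: `T 0 = Σ̂` plays the role of `Σ̃₁`.) -/
theorem schur_deflation_eigenpairs {p : ℕ}
    (S Λm : Matrix (Fin p) (Fin p) ℝ)
    (hSsym : S.IsSymm) (hΛsym : Λm.IsSymm)
    (hΛpd : ∀ x : Fin p → ℝ, x ≠ 0 → 0 < x ⬝ᵥ (Λm *ᵥ x))
    (βh : Fin p → Fin p → ℝ) (ρ : Fin p → ℝ)
    (heig : ∀ j, S *ᵥ βh j = ρ j • (Λm *ᵥ βh j))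
    (hnorm : ∀ i j, βh i ⬝ᵥ (S *ᵥ βh j) = if i = j then ρ i else 0)
    (hmono : ∀ i j : Fin p, i ≤ j → ρ j ≤ ρ i)
    (hpos : ∀ j, 0 < ρ j)
    (T : ℕ → Matrix (Fin p) (Fin p) ℝ)
    (hT0 : T 0 = S)
    (hTs : ∀ ℓ, ∀ h : ℓ < p,
      T (ℓ + 1) = T ℓ -
        (1 / (βh ⟨ℓ, h⟩ ⬝ᵥ (T ℓ *ᵥ βh ⟨ℓ, h⟩))) •
          Matrix.vecMulVec (T ℓ *ᵥ βh ⟨ℓ, h⟩) (Matrix.vecMul (βh ⟨ℓ, h⟩) (T ℓ)))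
    (k : ℕ) (hk : k + 1 < p) :
    (∀ j : Fin p, (j : ℕ) ≤ k → T (k + 1) *ᵥ βh j = 0) ∧
    (∀ j : Fin p, k + 1 ≤ (j : ℕ) → T (k + 1) *ᵥ βh j = S *ᵥ βh j) ∧
    (T (k + 1) *ᵥ βh ⟨k + 1, hk⟩ = ρ ⟨k + 1, hk⟩ • (Λm *ᵥ βh ⟨k + 1, hk⟩) ∧
      ∀ β : Fin p → ℝ, β ≠ 0 →
        (β ⬝ᵥ (T (k + 1) *ᵥ β)) / (β ⬝ᵥ (Λm *ᵥ β)) ≤ ρ ⟨k + 1, hk⟩) :=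
  schur_deflation_eigenpairs_general S Λm βh ρ heig hnorm hmono hpos T hT0 hTs k hk
end

section
/- Let V₁ ∈ ℝ^p be nonzero, β̂ a unit eigenvector of a symmetric matrix P̂, and v₁ = V₁/‖V₁‖₂. If ‖V₁V₁⊤ - P̂‖_F ≤ ε and β̂ is the leading unit eigenvector of P̂ (with appropriate sign), then, by the Davis–Kahan theorem in the form of Vu–Lei, (1/(2√2))‖v₁ - β̂‖₂ ≤ ‖V₁V₁⊤ - P̂‖_F / (V₁⊤V₁), i.e., ‖v₁ - β̂‖₂ ≤ 2√2 ε/‖V₁‖₂². -/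
open Finset Real Matrix

private lemma dk_aux1 {x e : ℝ} (hx : 0 ≤ x) (he : 0 ≤ e)
    (h : x ^ 2 ≤ e ^ 2 * (2 * x)) : x ≤ 2 * e ^ 2 := by
  nlinarith

private lemma dk_aux2 {c L : ℝ} (hc : 0 ≤ c) (hL : 0 < L) (h : c * c * L ≤ L) : c ≤ 1 := by
  have h1 : c * c ≤ 1 := by nlinarith
  nlinarith [h1]

private lemma dk_aux3 {c L e : ℝ} (hL : 0 < L) (hc0 : 0 ≤ c) (hc1 : c ≤ 1)
    (h : L * (L - c * c * L) ≤ 2 * e ^ 2) : (2 - 2 * c) * L ^ 2 ≤ 8 * e ^ 2 := by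
  nlinarith [mul_nonneg (mul_nonneg hc0 (sub_nonneg.mpr hc1)) (sq_nonneg L), sq_nonneg e]

/-- Davis–Kahan (Vu–Lei rank-one form): if `β̂` is the leading unit eigenvector of a
symmetric matrix `P̂` (sign-aligned with `V₁`) and `‖V₁V₁⊤ - P̂‖_F ≤ ε`, then
`‖V₁/‖V₁‖ - β̂‖₂ ≤ 2√2·ε/‖V₁‖²`. -/
theorem davis_kahan_rank_one {p : ℕ} (V : Fin p → ℝ) (hV : V ≠ 0)
    (P : Matrix (Fin p) (Fin p) ℝ) (hPsym : P.IsSymm)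
    (βh : Fin p → ℝ) (hβu : ∑ i, (βh i) ^ 2 = 1)
    (μ : ℝ) (heig : P *ᵥ βh = μ • βh)
    (hlead : ∀ x : Fin p → ℝ, x ≠ 0 → (x ⬝ᵥ (P *ᵥ x)) / (∑ i, (x i) ^ 2) ≤ μ)
    (hsign : 0 ≤ βh ⬝ᵥ V)
    (ε : ℝ) (hF : Real.sqrt (∑ i, ∑ j, (V i * V j - P i j) ^ 2) ≤ ε) :
    Real.sqrt (∑ i, (V i / Real.sqrt (∑ j, (V j) ^ 2) - βh i) ^ 2) ≤
      2 * Real.sqrt 2 * ε / (∑ i, (V i) ^ 2) := by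
  classical
  set L : ℝ := ∑ i, (V i) ^ 2 with hLdef
  set S : ℝ := ∑ i, βh i * V i with hSdef
  have hL0 : 0 < L := by
    obtain ⟨i, hi⟩ := Function.ne_iff.mp hV
    have hi' : V i ≠ 0 := by simpa using hi
    exact Finset.sum_pos' (fun j _ => sq_nonneg _)
      ⟨i, Finset.mem_univ i, by positivity⟩
  have hε0 : 0 ≤ ε := le_trans (Real.sqrt_nonneg _) hF
  -- μ = β⊤Pβ
  have hββ : βh ⬝ᵥ βh = 1 := by
    simpa [dotProduct, pow_two] using hβu
  have hμ : βh ⬝ᵥ (P *ᵥ βh) = μ := by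
    rw [heig, dotProduct_smul, hββ]; simp
  -- V⊤PV ≤ μ L
  have hVP : V ⬝ᵥ (P *ᵥ V) ≤ μ * L := by
    have := hlead V hV
    rw [div_le_iff₀ hL0] at this
    simpa [hLdef] using this
  -- dot products as double sums
  have eV : V ⬝ᵥ (P *ᵥ V) = ∑ i, ∑ j, V i * (P i j * V j) := by
    simp [dotProduct, Matrix.mulVec, Finset.mul_sum]
  have eβ : βh ⬝ᵥ (P *ᵥ βh) = ∑ i, ∑ j, βh i * (P i j * βh j) := by
    simp [dotProduct, Matrix.mulVec, Finset.mul_sum]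
  -- pieces
  have e1 : (∑ i, ∑ j, (V i * V j) * (V i * V j)) = L * L := by
    rw [hLdef, Finset.sum_mul_sum]
    exact Finset.sum_congr rfl fun i _ => Finset.sum_congr rfl fun j _ => by ring
  have e2 : (∑ i, ∑ j, (V i * βh i) * (V j * βh j)) = S * S := by
    rw [hSdef, Finset.sum_mul_sum]
    exact Finset.sum_congr rfl fun i _ => Finset.sum_congr rfl fun j _ => by ring
  have e3 : (∑ i, ∑ j, (βh i)^2 * (βh j)^2) = 1 := by
    rw [← Finset.sum_mul_sum, hβu]; ring
  -- expansion of the key inner product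
  have expand : (∑ i, ∑ j, (V i * V j - P i j) * (V i * V j - L * (βh i * βh j)))
      = (∑ i, ∑ j, (V i * V j) * (V i * V j))
        - L * (∑ i, ∑ j, (V i * βh i) * (V j * βh j))
        - (∑ i, ∑ j, V i * (P i j * V j))
        + L * (∑ i, ∑ j, βh i * (P i j * βh j)) := by
    simp only [Finset.mul_sum, ← Finset.sum_sub_distrib, ← Finset.sum_add_distrib]
    exact Finset.sum_congr rfl fun i _ => Finset.sum_congr rfl fun j _ => by ring
  have hEM : L * (L - S * S) ≤
      ∑ i, ∑ j, (V i * V j - P i j) * (V i * V j - L * (βh i * βh j)) := by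
    rw [expand, e1, e2, ← eV, ← eβ, hμ]
    nlinarith [hVP]
  -- norm of M
  have hM2 : (∑ i, ∑ j, (V i * V j - L * (βh i * βh j)) ^ 2) = 2 * (L * (L - S * S)) := by
    have expand2 : (∑ i, ∑ j, (V i * V j - L * (βh i * βh j)) ^ 2)
        = (∑ i, ∑ j, (V i * V j) * (V i * V j))
          - 2 * L * (∑ i, ∑ j, (V i * βh i) * (V j * βh j))
          + L * L * (∑ i, ∑ j, (βh i)^2 * (βh j)^2) := by
      simp only [Finset.mul_sum, ← Finset.sum_sub_distrib, ← Finset.sum_add_distrib]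
      exact Finset.sum_congr rfl fun i _ => Finset.sum_congr rfl fun j _ => by ring
    rw [expand2, e1, e2, e3]; ring
  -- Cauchy–Schwarz on the double sum
  have hCS : (∑ i, ∑ j, (V i * V j - P i j) * (V i * V j - L * (βh i * βh j))) ^ 2
      ≤ (∑ i, ∑ j, (V i * V j - P i j) ^ 2)
        * (∑ i, ∑ j, (V i * V j - L * (βh i * βh j)) ^ 2) := by
    have h := Finset.sum_mul_sq_le_sq_mul_sq Finset.univ
      (fun q : Fin p × Fin p => V q.1 * V q.2 - P q.1 q.2)
      (fun q : Fin p × Fin p => V q.1 * V q.2 - L * (βh q.1 * βh q.2))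
    simpa [Fintype.sum_prod_type] using h
  -- S² ≤ L
  have hS2 : S * S ≤ L := by
    have h := Finset.sum_mul_sq_le_sq_mul_sq Finset.univ βh V
    rw [hβu] at h
    calc S * S = (∑ i, βh i * V i) ^ 2 := by rw [hSdef]; ring
      _ ≤ 1 * L := by simpa [hLdef] using h
      _ = L := one_mul L
  have hD0 : 0 ≤ L - S * S := by linarith
  have hnnLD : 0 ≤ L * (L - S * S) := mul_nonneg hL0.le hD0
  -- Frobenius bound
  have hE2nn : 0 ≤ ∑ i, ∑ j, (V i * V j - P i j) ^ 2 :=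
    Finset.sum_nonneg fun i _ => Finset.sum_nonneg fun j _ => sq_nonneg _
  have hE2 : (∑ i, ∑ j, (V i * V j - P i j) ^ 2) ≤ ε ^ 2 := by
    calc (∑ i, ∑ j, (V i * V j - P i j) ^ 2)
        = (Real.sqrt (∑ i, ∑ j, (V i * V j - P i j) ^ 2)) ^ 2 :=
          (Real.sq_sqrt hE2nn).symm
      _ ≤ ε ^ 2 := pow_le_pow_left₀ (Real.sqrt_nonneg _) hF 2
  -- main spectral bound : L (L − S²) ≤ 2 ε²
  have hLD : L * (L - S * S) ≤ 2 * ε ^ 2 := by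
    have hM2nn : 0 ≤ ∑ i, ∑ j, (V i * V j - L * (βh i * βh j)) ^ 2 :=
      Finset.sum_nonneg fun i _ => Finset.sum_nonneg fun j _ => sq_nonneg _
    have key : (L * (L - S * S)) ^ 2 ≤ ε ^ 2 * (2 * (L * (L - S * S))) := by
      calc (L * (L - S * S)) ^ 2
          ≤ (∑ i, ∑ j, (V i * V j - P i j) * (V i * V j - L * (βh i * βh j))) ^ 2 :=
            pow_le_pow_left₀ hnnLD hEM 2
        _ ≤ (∑ i, ∑ j, (V i * V j - P i j) ^ 2)
            * (∑ i, ∑ j, (V i * V j - L * (βh i * βh j)) ^ 2) := hCS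
        _ ≤ ε ^ 2 * (2 * (L * (L - S * S))) := by
            rw [hM2]; exact mul_le_mul_of_nonneg_right hE2 (by rw [← hM2]; exact hM2nn)
    exact dk_aux1 hnnLD hε0 key
  -- finish
  have hsL : (0:ℝ) < Real.sqrt L := Real.sqrt_pos.mpr hL0
  have hsLsq : Real.sqrt L * Real.sqrt L = L := Real.mul_self_sqrt hL0.le
  have hfin : (∑ i, (V i / Real.sqrt L - βh i) ^ 2) = 2 - 2 * (S / Real.sqrt L) := by
    have hterm : ∀ i, (V i / Real.sqrt L - βh i) ^ 2
        = (V i) ^ 2 / L - 2 * ((βh i * V i) / Real.sqrt L) + (βh i) ^ 2 := by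
      intro i
      have hp : (Real.sqrt L) ^ 2 = L := Real.sq_sqrt hL0.le
      have h1 : (V i / Real.sqrt L - βh i) ^ 2
          = (V i) ^ 2 / (Real.sqrt L) ^ 2 - 2 * ((βh i * V i) / Real.sqrt L) + (βh i) ^ 2 := by
        field_simp
        linear_combination (0 : ℝ) * hp
      rw [h1, hp]
    rw [Finset.sum_congr rfl fun i _ => hterm i]
    rw [Finset.sum_add_distrib, Finset.sum_sub_distrib, ← Finset.sum_div,
      div_self hL0.ne', hβu]
    have hmid : (∑ x, 2 * ((βh x * V x) / Real.sqrt L)) = 2 * (S / Real.sqrt L) := by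
      rw [← Finset.mul_sum, ← Finset.sum_div, ← hSdef]
    rw [hmid]
    ring
  have hS0 : 0 ≤ S := by simpa [dotProduct, hSdef] using hsign
  set c : ℝ := S / Real.sqrt L with hcdef
  have hc0 : 0 ≤ c := div_nonneg hS0 hsL.le
  have hcS : S = c * Real.sqrt L := by
    rw [hcdef, div_mul_cancel₀ _ hsL.ne']
  have hc2 : S * S = c * c * L := by
    calc S * S = c * c * (Real.sqrt L * Real.sqrt L) := by rw [hcS]; ring
      _ = c * c * L := by rw [hsLsq]
  have hc1 : c ≤ 1 := dk_aux2 hc0 hL0 (by rw [← hc2]; exact hS2)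
  have hRnn : 0 ≤ 2 * Real.sqrt 2 * ε / L := div_nonneg (by positivity) hL0.le
  rw [hfin]
  have hLD' : L * (L - c * c * L) ≤ 2 * ε ^ 2 := by rw [← hc2]; exact hLD
  have hgoal2 : 2 - 2 * c ≤ (2 * Real.sqrt 2 * ε / L) ^ 2 := by
    have hsq2 : Real.sqrt 2 * Real.sqrt 2 = 2 := Real.mul_self_sqrt (by norm_num)
    have hrw : (2 * Real.sqrt 2 * ε / L) ^ 2 = 8 * ε ^ 2 / L ^ 2 := by
      rw [div_pow]
      congr 1
      calc (2 * Real.sqrt 2 * ε) ^ 2 = 4 * (Real.sqrt 2 * Real.sqrt 2) * ε ^ 2 := by ring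
        _ = 8 * ε ^ 2 := by rw [hsq2]; ring
    rw [hrw, le_div_iff₀ (by positivity : (0:ℝ) < L ^ 2)]
    exact dk_aux3 hL0 hc0 hc1 hLD'
  calc Real.sqrt (2 - 2 * c) ≤ Real.sqrt ((2 * Real.sqrt 2 * ε / L) ^ 2) :=
        Real.sqrt_le_sqrt hgoal2
    _ = 2 * Real.sqrt 2 * ε / L := Real.sqrt_sq hRnn
end
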